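/- For a reduced word v ∈ F_N of length p and any k ≥ 1, the trace-preserving conditional expectation of v^{⊗k} onto the Laplacian subalgebra B^(k) equals w_p^(k) / ‖w_p^(k)‖₂², i.e., E_k(v^{⊗k}) = w_p^(k) / (2N(2N-1)^{p-1}) for p ≥ 1. -/

import Mathlib

open FreeGroup List
variable {α : Type*} [DecidableEq α]
/-- no-cancellation relation on letters -/
def Rd (a b : α × Bool) : Prop := ¬(a.1 = b.1 ∧ a.2 = !b.2)
instance : DecidableRel (Rd (α := α)) := fun _ _ => instDecidableNot

theorem reduce_of_chain' : ∀ {L : List (α × Bool)}, L.Chain' Rd → FreeGroup.reduce L = L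
  | [], _ => rfl
  | a :: L, h => by
    rw [FreeGroup.reduce.cons, reduce_of_chain' (List.isChain_cons.1 h).2]
    cases L with
    | nil => rfl
    | cons b t =>
      have hc : ¬(a.1 = b.1 ∧ a.2 = !b.2) := (List.isChain_cons_cons.1 h).1
      dsimp only
      rw [if_neg hc]

theorem chain'_of_reduce : ∀ {L : List (α × Bool)}, FreeGroup.reduce L = L → L.Chain' Rd
  | [], _ => List.isChain_nil
  | a :: L, h => by
    have hle := (FreeGroup.Red.length_le (FreeGroup.reduce.red (L := L)))
    rw [FreeGroup.reduce.cons] at h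
    rcases hr : FreeGroup.reduce L with _ | ⟨b, t⟩
    · rw [hr] at h
      simp only [List.cons.injEq] at h
      rw [← h.2]
      exact List.isChain_singleton _
    · rw [hr] at h hle
      dsimp only at h
      by_cases hc : a.1 = b.1 ∧ a.2 = !b.2
      · rw [if_pos hc] at h
        exfalso
        have := congrArg List.length h
        simp at this hle
        omega
      · rw [if_neg hc] at h
        have hL : L = b :: t := ((List.cons.injEq _ _ _ _ ▸ h).2).symm
        subst hL
        exact List.isChain_cons_cons.2 ⟨hc, chain'_of_reduce hr⟩

variable [Fintype α]

/-- Finset of reduced words of length `n`. -/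
def redWords (α : Type*) [DecidableEq α] [Fintype α] : ℕ → Finset (List (α × Bool))
  | 0 => {[]}
  | n+1 => (redWords α n).biUnion fun L =>
      (Finset.univ.filter fun a => ∀ b ∈ L.head?, Rd a b).image (· :: L)

theorem mem_redWords : ∀ {n : ℕ} {L : List (α × Bool)},
    L ∈ redWords α n ↔ L.Chain' Rd ∧ L.length = n
  | 0, L => by simp [redWords, List.length_eq_zero_iff]; rintro rfl; exact List.isChain_nil
  | n+1, L => by
    simp only [redWords, Finset.mem_biUnion, Finset.mem_image, Finset.mem_filter,
      Finset.mem_univ, true_and]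
    constructor
    · rintro ⟨L', hL', a, ha, rfl⟩
      obtain ⟨h1, h2⟩ := mem_redWords.1 hL'
      exact ⟨List.isChain_cons.2 ⟨ha, h1⟩, by simp [h2]⟩
    · rintro ⟨h1, h2⟩
      cases L with
      | nil => simp at h2
      | cons a L' =>
        obtain ⟨ha, h1'⟩ := List.isChain_cons.1 h1
        exact ⟨L', mem_redWords.2 ⟨h1', by simpa using h2⟩, a, ha, rfl⟩

theorem card_redWords_one : (redWords α 1).card = Fintype.card α * 2 := by
  have : redWords α 1 = Finset.univ.image (fun a : α × Bool => [a]) := by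
    simp [redWords]
  rw [this, Finset.card_image_of_injective _ (fun a b h => by simpa using h)]
  simp [Fintype.card_prod]

theorem card_redWords_succ {n : ℕ} (hn : 1 ≤ n) :
    (redWords α (n+1)).card = (redWords α n).card * (Fintype.card α * 2 - 1) := by
  rw [show redWords α (n+1) = (redWords α n).biUnion fun L =>
      (Finset.univ.filter fun a => ∀ b ∈ L.head?, Rd a b).image (· :: L) from rfl]
  rw [Finset.card_biUnion]
  · rw [Finset.sum_congr rfl (fun L hL => ?_), Finset.sum_const, smul_eq_mul]
    obtain ⟨h1, h2⟩ := mem_redWords.1 hL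
    cases L with
    | nil => simp at h2; omega
    | cons b t =>
      rw [Finset.card_image_of_injective _ (fun a b h => by simpa using h)]
      have : (Finset.univ.filter fun a : α × Bool => ∀ b' ∈ (b :: t).head?, Rd a b')
          = Finset.univ.erase (b.1, !b.2) := by
        ext a
        simp [Rd, Prod.ext_iff, eq_comm]
      rw [this, Finset.card_erase_of_mem (Finset.mem_univ _)]
      simp [Fintype.card_prod]
  · intro L1 h1 L2 h2 hne
    simp only [Finset.disjoint_left, Finset.mem_image]
    rintro x ⟨a, ha, rfl⟩ ⟨a', ha', h⟩
    simp only [List.cons.injEq] at h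
    exact hne h.2.symm

theorem card_redWords {p : ℕ} (hp : 1 ≤ p) :
    (redWords α p).card = Fintype.card α * 2 * (Fintype.card α * 2 - 1) ^ (p - 1) := by
  induction p with
  | zero => omega
  | succ n ih =>
    rcases Nat.eq_or_lt_of_le hp with h | h
    · rw [← h]; simpa using card_redWords_one
    · have hn : 1 ≤ n := by omega
      rw [card_redWords_succ hn, ih hn]
      have : n + 1 - 1 = (n - 1) + 1 := by omega
      rw [this, pow_succ, mul_assoc]

/-- The sphere of radius `p` in the free group, as a Finset. -/
def sphere (α : Type*) [DecidableEq α] [Fintype α] (p : ℕ) : Finset (FreeGroup α) :=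
  (redWords α p).image FreeGroup.mk

theorem mem_sphere {p : ℕ} {v : FreeGroup α} :
    v ∈ sphere α p ↔ FreeGroup.norm v = p := by
  simp only [sphere, Finset.mem_image]
  constructor
  · rintro ⟨L, hL, rfl⟩
    obtain ⟨h1, h2⟩ := mem_redWords.1 hL
    rw [FreeGroup.norm, FreeGroup.toWord_mk, reduce_of_chain' h1, h2]
  · intro hn
    exact ⟨v.toWord, mem_redWords.2 ⟨chain'_of_reduce (FreeGroup.reduce_toWord v), hn⟩,
      FreeGroup.mk_toWord⟩

theorem card_sphere (p : ℕ) : (sphere α p).card = (redWords α p).card := by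
  rw [sphere, Finset.card_image_of_injOn]
  intro L1 h1 L2 h2 h
  have := congrArg FreeGroup.toWord h
  rwa [FreeGroup.toWord_mk, FreeGroup.toWord_mk,
    reduce_of_chain' (mem_redWords.1 h1).1, reduce_of_chain' (mem_redWords.1 h2).1] at this



/-- `w_n^(k) = Σ_{|v|=n} v^{⊗k}` in `ℂ[F_N]^{⊗k} ≅ ℂ[F_N^k]`, realized as the
monoid algebra of `Fin k → F_N` (with `v^{⊗k}` the constant function at `v`). -/
noncomputable def laplacianWk (N k n : ℕ) :
    MonoidAlgebra ℂ (Fin k → FreeGroup (Fin N)) :=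
  ∑ᶠ (v : FreeGroup (Fin N)) (_ : FreeGroup.norm v = n),
    MonoidAlgebra.of ℂ (Fin k → FreeGroup (Fin N)) (fun _ => v)

/-- The canonical trace `τ^{⊗k}`: the coefficient of the identity. -/
noncomputable def traceK (N k : ℕ)
    (x : MonoidAlgebra ℂ (Fin k → FreeGroup (Fin N))) : ℂ := x.coeff 1

/-- The canonical involution on the group algebra: conjugate coefficients and
invert group elements. -/
noncomputable def starK (N k : ℕ)
    (x : MonoidAlgebra ℂ (Fin k → FreeGroup (Fin N))) :
    MonoidAlgebra ℂ (Fin k → FreeGroup (Fin N)) :=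
  MonoidAlgebra.ofCoeff
    (Finsupp.mapDomain (·⁻¹) (Finsupp.mapRange (starRingEnd ℂ) (map_zero _) x.coeff))

/-- `‖x‖₂² = τ^{⊗k}(x* x)` (a real number). -/
noncomputable def normSqK (N k : ℕ)
    (x : MonoidAlgebra ℂ (Fin k → FreeGroup (Fin N))) : ℝ :=
  (traceK N k (starK N k x * x)).re

/-- The trace-preserving conditional expectation onto the Laplacian subalgebra,
`E_k(x) = Σ_n τ^{⊗k}(x w_n^(k)) w_n^(k) / ‖w_n^(k)‖₂²`. -/
noncomputable def Ek (N k : ℕ)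
    (x : MonoidAlgebra ℂ (Fin k → FreeGroup (Fin N))) :
    MonoidAlgebra ℂ (Fin k → FreeGroup (Fin N)) :=
  ∑ᶠ n : ℕ,
    (traceK N k (x * laplacianWk N k n) / (normSqK N k (laplacianWk N k n) : ℂ)) •
      laplacianWk N k n

section Algebra

variable (N k : ℕ)

theorem traceK_single (g : Fin k → FreeGroup (Fin N)) (c : ℂ) :
    traceK N k (MonoidAlgebra.single g c) = if g = 1 then c else 0 := by
  simp [traceK, MonoidAlgebra.coeff_single, Finsupp.single_apply]

theorem traceK_sum {ι : Type*} (s : Finset ι)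
    (f : ι → MonoidAlgebra ℂ (Fin k → FreeGroup (Fin N))) :
    traceK N k (∑ i ∈ s, f i) = ∑ i ∈ s, traceK N k (f i) :=
  by simp only [traceK, MonoidAlgebra.coeff_sum]; exact Finsupp.finset_sum_apply _ _ 1

theorem starK_single (g : Fin k → FreeGroup (Fin N)) (c : ℂ) :
    starK N k (MonoidAlgebra.single g c) = MonoidAlgebra.single g⁻¹ ((starRingEnd ℂ) c) := by
  simp [starK, MonoidAlgebra.coeff_single]

theorem starK_sum {ι : Type*} (s : Finset ι)
    (f : ι → MonoidAlgebra ℂ (Fin k → FreeGroup (Fin N))) :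
    starK N k (∑ i ∈ s, f i) = ∑ i ∈ s, starK N k (f i) := by
  simp only [starK, MonoidAlgebra.coeff_sum, Finsupp.mapRange_finset_sum,
    Finsupp.mapDomain_finset_sum, MonoidAlgebra.ofCoeff_sum]

theorem lap_eq (n : ℕ) : laplacianWk N k n =
    ∑ v ∈ sphere (Fin N) n, MonoidAlgebra.single (R := ℂ) (fun _ : Fin k => v) 1 := by
  classical
  rw [laplacianWk]
  have h1 : ∀ v : FreeGroup (Fin N),
      (∑ᶠ (_ : FreeGroup.norm v = n),
        MonoidAlgebra.of ℂ (Fin k → FreeGroup (Fin N)) (fun _ => v)) =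
      if FreeGroup.norm v = n then MonoidAlgebra.single (R := ℂ) (fun _ : Fin k => v) 1 else 0 :=
    fun v => finsum_eq_if
  rw [finsum_congr h1,
    finsum_eq_finset_sum_of_support_subset _ (s := sphere (Fin N) n) ?_]
  · refine Finset.sum_congr rfl fun v hv => ?_
    rw [if_pos (mem_sphere.1 hv)]
  · intro v hv
    simp only [Function.mem_support, ne_eq, ite_eq_right_iff, not_forall] at hv
    exact Finset.mem_coe.2 (mem_sphere.2 hv.1)

end Algebra

/-- For a reduced word `v` of length `p ≥ 1` and `k ≥ 1`,
`E_k(v^{⊗k}) = w_p^(k) / (2N(2N-1)^{p-1})`. -/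
theorem stmt_15 (N k : ℕ) (hN : 2 ≤ N) (hk : 1 ≤ k)
    (v : FreeGroup (Fin N)) (p : ℕ) (hp : 1 ≤ p) (hv : FreeGroup.norm v = p) :
    Ek N k (MonoidAlgebra.of ℂ (Fin k → FreeGroup (Fin N)) (fun _ => v)) =
      (((2 * N * (2 * N - 1) ^ (p - 1) : ℕ) : ℂ))⁻¹ • laplacianWk N k p := by
  classical
  have hcard : (sphere (Fin N) p).card = 2 * N * (2 * N - 1) ^ (p - 1) := by
    rw [card_sphere, card_redWords hp, Fintype.card_fin, Nat.mul_comm N 2]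
  have hone : ∀ u : FreeGroup (Fin N),
      ((fun _ : Fin k => u) = (1 : Fin k → FreeGroup (Fin N))) ↔ u = 1 := by
    intro u
    constructor
    · intro h; exact congrFun h ⟨0, hk⟩
    · rintro rfl; rfl
  -- the trace of `v^{⊗k} w_n`
  have htr : ∀ n : ℕ, traceK N k
      (MonoidAlgebra.single (R := ℂ) (fun _ : Fin k => v) 1 * laplacianWk N k n) =
      if n = p then 1 else 0 := by
    intro n
    rw [lap_eq, Finset.mul_sum, traceK_sum]
    have h2 : ∀ u ∈ sphere (Fin N) n,
        traceK N k (MonoidAlgebra.single (R := ℂ) (fun _ : Fin k => v) 1 *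
          MonoidAlgebra.single (R := ℂ) (fun _ : Fin k => u) 1) = if u = v⁻¹ then (1 : ℂ) else 0 := by
      intro u _
      rw [MonoidAlgebra.single_mul_single, one_mul, traceK_single]
      congr 1
      have : ((fun _ : Fin k => v) * fun _ : Fin k => u) = fun _ : Fin k => v * u := rfl
      rw [this, hone (v * u), mul_eq_one_iff_inv_eq]
      exact propext eq_comm
    rw [Finset.sum_congr rfl h2, Finset.sum_ite_eq']
    by_cases h : n = p
    · subst h
      rw [if_pos, if_pos rfl]
      exact mem_sphere.2 (by rw [FreeGroup.norm_inv_eq, hv])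
    · rw [if_neg, if_neg h]
      intro hmem
      exact h (by rw [← mem_sphere.1 hmem, FreeGroup.norm_inv_eq, hv])
  -- the norm square of `w_n`
  have hns : ∀ n : ℕ, normSqK N k (laplacianWk N k n) = ((sphere (Fin N) n).card : ℝ) := by
    intro n
    rw [normSqK, lap_eq, starK_sum]
    have h3 : ∀ u ∈ sphere (Fin N) n,
        starK N k (MonoidAlgebra.single (R := ℂ) (fun _ : Fin k => u) 1) =
          MonoidAlgebra.single (R := ℂ) (fun _ : Fin k => u⁻¹) 1 := by
      intro u _
      rw [starK_single]
      norm_num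
      rfl
    rw [Finset.sum_congr rfl h3, Finset.sum_mul]
    have h4 : ∀ u ∈ sphere (Fin N) n,
        (MonoidAlgebra.single (R := ℂ) (fun _ : Fin k => u⁻¹) 1 *
          ∑ w ∈ sphere (Fin N) n, MonoidAlgebra.single (R := ℂ) (fun _ : Fin k => w) 1) =
        ∑ w ∈ sphere (Fin N) n,
          MonoidAlgebra.single (R := ℂ) (fun _ : Fin k => u⁻¹ * w) 1 := by
      intro u _
      rw [Finset.mul_sum]
      refine Finset.sum_congr rfl fun w _ => ?_
      rw [MonoidAlgebra.single_mul_single, mul_one]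
      rfl
    rw [Finset.sum_congr rfl h4, traceK_sum]
    have h5 : ∀ u ∈ sphere (Fin N) n,
        traceK N k (∑ w ∈ sphere (Fin N) n,
          MonoidAlgebra.single (R := ℂ) (fun _ : Fin k => u⁻¹ * w) 1) = 1 := by
      intro u hu
      rw [traceK_sum]
      have h6 : ∀ w ∈ sphere (Fin N) n,
          traceK N k (MonoidAlgebra.single (R := ℂ) (fun _ : Fin k => u⁻¹ * w) 1) =
          if w = u then (1 : ℂ) else 0 := by
        intro w _
        rw [traceK_single]
        congr 1
        rw [hone (u⁻¹ * w), inv_mul_eq_one]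
        exact propext eq_comm
      rw [Finset.sum_congr rfl h6, Finset.sum_ite_eq', if_pos hu]
    rw [Finset.sum_congr rfl h5, Finset.sum_const, nsmul_eq_mul, mul_one]
    simp
  -- assemble
  rw [Ek, MonoidAlgebra.of_apply]
  rw [finsum_eq_single _ p ?_]
  · rw [htr p, if_pos rfl, hns p, hcard]
    norm_num
  · intro n hn
    rw [htr n, if_neg hn, zero_div, zero_smul]
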